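/- Let T be a tree and S = (S_A, S_B, S_C) a labeling of T such that (T, S) belongs to the family 𝒯. Then γ_t2(T) = 2(n(T) − l(T) + 2)/5, where n(T) is the order of T and l(T) its number of leaves; moreover S_A is a semitotal dominating set of T of minimum cardinality. -/

import Mathlib

open SimpleGraph

/-- A dominating set: every vertex outside `S` has a neighbor in `S`. -/
def IsDominatingSet {V : Type} (G : SimpleGraph V) (S : Set V) : Prop :=
  ∀ v ∉ S, ∃ u ∈ S, G.Adj u v

/-- A total dominating set: every vertex has a neighbor in `S`. -/
def IsTotalDominatingSet {V : Type} (G : SimpleGraph V) (S : Set V) : Prop :=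
  ∀ v : V, ∃ u ∈ S, G.Adj u v

/-- `u` is within distance two of `v`. -/
def WithinTwo {V : Type} (G : SimpleGraph V) (u v : V) : Prop :=
  G.Adj u v ∨ ∃ w, G.Adj u w ∧ G.Adj w v

/-- A semitotal dominating set: a dominating set in which every vertex is within
distance two of another vertex of the set. -/
def IsSemitotalDominatingSet {V : Type} (G : SimpleGraph V) (S : Set V) : Prop :=
  IsDominatingSet G S ∧ ∀ v ∈ S, ∃ u ∈ S, u ≠ v ∧ WithinTwo G u v

/-- The domination number `γ(G)`. -/
noncomputable def dominationNumber {V : Type} (G : SimpleGraph V) : ℕ :=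
  sInf {n | ∃ S : Set V, IsDominatingSet G S ∧ S.ncard = n}

/-- The total domination number `γ_t(G)`. -/
noncomputable def totalDominationNumber {V : Type} (G : SimpleGraph V) : ℕ :=
  sInf {n | ∃ S : Set V, IsTotalDominatingSet G S ∧ S.ncard = n}

/-- The semitotal domination number `γ_t2(G)`. -/
noncomputable def semitotalDominationNumber {V : Type} (G : SimpleGraph V) : ℕ :=
  sInf {n | ∃ S : Set V, IsSemitotalDominatingSet G S ∧ S.ncard = n}

/-- A leaf: a vertex of degree one. -/
def IsLeaf {V : Type} (G : SimpleGraph V) (v : V) : Prop :=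
  (G.neighborSet v).ncard = 1

/-- A support vertex: a vertex adjacent to a leaf. -/
def IsSupport {V : Type} (G : SimpleGraph V) (v : V) : Prop :=
  ∃ u, G.Adj v u ∧ IsLeaf G u

/-- A star: a graph isomorphic to `K_{1,m}` for some `m ≥ 1`. -/
def IsStar {V : Type} (G : SimpleGraph V) : Prop :=
  ∃ m : ℕ, 1 ≤ m ∧ Nonempty (G ≃g completeBipartiteGraph Unit (Fin m))

/-- The graph obtained from the disjoint union of `G` and `H` by adding
the single edge joining `v : V` to `w : W`. -/
def attach {V W : Type} (G : SimpleGraph V) (H : SimpleGraph W) (v : V) (w : W) :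
    SimpleGraph (V ⊕ W) where
  Adj x y :=
    match x, y with
    | Sum.inl a, Sum.inl b => G.Adj a b
    | Sum.inr a, Sum.inr b => H.Adj a b
    | Sum.inl a, Sum.inr b => a = v ∧ b = w
    | Sum.inr a, Sum.inl b => b = v ∧ a = w
  symm := by
    constructor
    rintro (a | a) (b | b) h
    · exact G.adj_symm h
    · exact ⟨h.1, h.2⟩
    · exact ⟨h.1, h.2⟩
    · exact H.adj_symm h
  loopless := by
    constructor
    rintro (a | a) h
    · exact G.irrefl h
    · exact H.irrefl h

/-- The statuses used to label the vertices of trees in the family `𝒯`. -/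
inductive Label : Type
  | A | B | C
deriving DecidableEq

/-- The labeling of the path `P₅` assigning `A` to the two support vertices,
`C` to the two leaves and `B` to the center. -/
def pathLabel : Fin 5 → Label
  | 0 => Label.C
  | 1 => Label.A
  | 2 => Label.B
  | 3 => Label.A
  | 4 => Label.C

/-- The family `𝒯` of labeled trees: it contains the labeled path `P₅`, and is closed
under operation `𝒪₁` (attach a new leaf labeled `C` to a vertex labeled `A`), operation
`𝒪₂` (attach a labeled path `P₅` to a degree-one vertex labeled `C`), and under
isomorphism of labeled graphs. -/
inductive TFamily : ∀ {V : Type}, SimpleGraph V → (V → Label) → Prop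
  | base : TFamily (SimpleGraph.pathGraph 5) pathLabel
  | op1 {V : Type} {G : SimpleGraph V} {f : V → Label} (v : V)
      (hv : f v = Label.A) (h : TFamily G f) :
      TFamily (attach G (⊥ : SimpleGraph (Fin 1)) v 0)
        (Sum.elim f (fun _ => Label.C))
  | op2 {V : Type} {G : SimpleGraph V} {f : V → Label} (v : V)
      (hv : f v = Label.C) (hdeg : (G.neighborSet v).ncard = 1) (h : TFamily G f) :
      TFamily (attach G (SimpleGraph.pathGraph 5) v 0) (Sum.elim f pathLabel)
  | iso {V W : Type} {G : SimpleGraph V} {H : SimpleGraph W} {f : V → Label}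
      (e : G ≃g H) (h : TFamily G f) : TFamily H (fun w => f (e.symm w))

/-- The subdivided star with `t` leaves: center `none`, and for each `i : Fin t`
a path `none — some (i,0) — some (i,1)`. -/
def subdividedStar (t : ℕ) : SimpleGraph (Option (Fin t × Fin 2)) :=
  SimpleGraph.fromRel (fun x y =>
    match x, y with
    | none, some p => p.2 = 0
    | some p, some q => p.1 = q.1 ∧ p.2 = 0 ∧ q.2 = 1
    | _, _ => False)

/-- The tree `Y` with three leaves, obtained from the star `K_{1,3}` with center `0`
by subdividing exactly one edge: edges `0-1`, `0-2`, `0-3`, `3-4`.  Its leaves are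
`1`, `2`, `4`; the leaf-neighbors of the center are `1` and `2`. -/
def Ytree : SimpleGraph (Fin 5) :=
  SimpleGraph.fromRel (fun x y =>
    (x = 0 ∧ y = 1) ∨ (x = 0 ∧ y = 2) ∨ (x = 0 ∧ y = 3) ∨ (x = 3 ∧ y = 4))

/-- An almost dominating set of `G` relative to `v`: dominates every vertex except
possibly `v`. -/
def IsAlmostDominatingSet {V : Type} (G : SimpleGraph V) (v : V) (S : Set V) : Prop :=
  ∀ w, w ≠ v → w ∉ S → ∃ u ∈ S, G.Adj u w

/-- The almost domination number `γ(G; v)`. -/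
noncomputable def almostDominationNumber {V : Type} (G : SimpleGraph V) (v : V) : ℕ :=
  sInf {n | ∃ S : Set V, IsAlmostDominatingSet G v S ∧ S.ncard = n}

/-- The family `𝒪` of trees: all trees obtainable from the path `P₄` by a finite
sequence of the operations `𝒪₁`–`𝒪₄` (and taking isomorphic copies). -/
inductive OFamily : ∀ {V : Type}, SimpleGraph V → Prop
  | base : OFamily (SimpleGraph.pathGraph 4)
  | op1 {V : Type} {G : SimpleGraph V} (v : V)
      (hv : ∃ S : Set V, IsSemitotalDominatingSet G S ∧
        S.ncard = semitotalDominationNumber G ∧ v ∈ S)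
      (h : OFamily G) :
      OFamily (attach G (⊥ : SimpleGraph (Fin 1)) v 0)
  | op2short {V : Type} {G : SimpleGraph V} (v : V)
      (hv : almostDominationNumber G v = dominationNumber G) (h : OFamily G) :
      OFamily (attach G (SimpleGraph.pathGraph 2) v 0)
  | op2long {V : Type} {G : SimpleGraph V} (v : V)
      (hv : almostDominationNumber G v = dominationNumber G) (h : OFamily G) :
      OFamily (attach G (SimpleGraph.pathGraph 5) v 0)
  | op3 {V : Type} {G : SimpleGraph V} (v : V) (t : ℕ) (ht : 2 ≤ t) (h : OFamily G) :
      OFamily (attach G (subdividedStar t) v none)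
  | op4 {V : Type} {G : SimpleGraph V} (v : V) (h : OFamily G) :
      OFamily (attach G Ytree v 1)
  | iso {V W : Type} {G : SimpleGraph V} {H : SimpleGraph W}
      (e : G ≃g H) (h : OFamily G) : OFamily H

/-! Every labeled tree `(T, S)` of `𝒯` satisfies an invariant preserved by `𝒪₁`, `𝒪₂` and
isomorphism: `S_A` is a semitotal dominating set whose vertices have degree at least two,
`5 |S_A| + 2 l(T) = 2 n(T) + 4`, and no semitotal dominating set of `T` is smaller than `S_A`.
Only minimality needs an argument: a semitotal dominating set of the enlarged tree is restricted
to the old tree and repaired. After `𝒪₁` the repair adds at most one vertex, and only when the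
new leaf was in the set. After `𝒪₂` the set contains at least two vertices of the new path, and
three if it contains the neighbour `u₁` of the old leaf `v`; the restriction, with `v` added in
the latter case, is repaired without growing by trading `v` for its neighbour when `v` has no
partner. -/

section Domination

variable {V W : Type} {G : SimpleGraph V} {H : SimpleGraph W}

theorem WithinTwo.map {G' : SimpleGraph W} (f : G →g G') {u x : V} (h : WithinTwo G u x) :
    WithinTwo G' (f u) (f x) := by
  rcases h with h | ⟨m, h₁, h₂⟩
  · exact .inl (f.map_adj h)
  · exact .inr ⟨f m, f.map_adj h₁, f.map_adj h₂⟩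

theorem IsSemitotalDominatingSet.two_le_ncard [Finite V] [Nonempty V] {S : Set V}
    (hS : IsSemitotalDominatingSet G S) : 2 ≤ S.ncard := by
  obtain ⟨x⟩ := ‹Nonempty V›
  obtain ⟨y, hy⟩ : S.Nonempty := by
    by_cases hx : x ∈ S
    · exact ⟨x, hx⟩
    · obtain ⟨u, hu, -⟩ := hS.1 x hx
      exact ⟨u, hu⟩
  obtain ⟨u, hu, hne, -⟩ := hS.2 y hy
  rw [← Set.ncard_pair hne]
  exact Set.ncard_le_ncard (Set.insert_subset hu (Set.singleton_subset_iff.2 hy))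

theorem semitotalDominationNumber_eq_ncard {A : Set V} (hA : IsSemitotalDominatingSet G A)
    (hmin : ∀ S, IsSemitotalDominatingSet G S → A.ncard ≤ S.ncard) :
    semitotalDominationNumber G = A.ncard :=
  le_antisymm (Nat.sInf_le ⟨A, hA, rfl⟩) (le_csInf ⟨_, A, hA, rfl⟩ <| by
    rintro n ⟨S, hS, rfl⟩
    exact hmin S hS)

theorem IsDominatingSet.preimage_iso (e : G ≃g H) {S : Set W} (hS : IsDominatingSet H S) :
    IsDominatingSet G (e ⁻¹' S) := by
  intro x hx
  obtain ⟨u, hu, hadj⟩ := hS (e x) hx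
  exact ⟨e.symm u, by simpa using hu, by simpa using e.symm.map_adj_iff.2 hadj⟩

theorem IsSemitotalDominatingSet.preimage_iso (e : G ≃g H) {S : Set W}
    (hS : IsSemitotalDominatingSet H S) : IsSemitotalDominatingSet G (e ⁻¹' S) := by
  refine ⟨hS.1.preimage_iso e, fun x hx => ?_⟩
  obtain ⟨u, hu, hne, hux⟩ := hS.2 (e x) hx
  refine ⟨e.symm u, by simpa using hu, fun h => hne (by rw [← h, e.apply_symm_apply]), ?_⟩
  simpa using hux.map e.symm.toHom

theorem ncard_neighborSet_iso (e : G ≃g H) (x : V) :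
    (H.neighborSet (e x)).ncard = (G.neighborSet x).ncard := by
  rw [← e.image_neighborSet, Set.ncard_image_of_injective _ e.injective]

theorem ncard_preimage_iso (e : G ≃g H) (S : Set W) : (e ⁻¹' S).ncard = S.ncard := by
  rw [Set.ncard_def, Set.ncard_def, Set.encard_preimage_of_bijective e.bijective]

theorem isSemitotalDominatingSet_insert_sdiff_of_neighborSet_eq_singleton {v a b : V}
    (hv : G.neighborSet v = {a}) (hab : G.Adj a b) (hbv : b ≠ v) {R : Set V}
    (hR : IsDominatingSet G R) (haR : a ∉ R)
    (hpart : ∀ x ∈ R, x ≠ v → ∃ y ∈ R, y ≠ x ∧ WithinTwo G y x) :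
    IsSemitotalDominatingSet G (insert a (R \ {v})) := by
  have hvx : ∀ x, G.Adj v x ↔ x = a := fun x => Set.ext_iff.1 hv x
  have hva : G.Adj v a := (hvx a).2 rfl
  constructor
  · intro x hx
    by_cases hxv : x = v
    · exact ⟨a, Set.mem_insert _ _, hxv ▸ hva.symm⟩
    obtain ⟨y, hyR, hyx⟩ := hR x fun h => hx (.inr ⟨h, hxv⟩)
    have hyv : y ≠ v := by
      rintro rfl
      exact hx (.inl ((hvx x).1 hyx))
    exact ⟨y, .inr ⟨hyR, hyv⟩, hyx⟩
  · rintro x (rfl | ⟨hxR, hxv⟩)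
    · by_cases hbR : b ∈ R
      · exact ⟨b, .inr ⟨hbR, hbv⟩, hab.ne', .inl hab.symm⟩
      obtain ⟨y, hyR, hyb⟩ := hR b hbR
      have hyv : y ≠ v := by
        rintro rfl
        exact hab.ne ((hvx b).1 hyb).symm
      exact ⟨y, .inr ⟨hyR, hyv⟩, fun h => haR (h ▸ hyR), .inr ⟨b, hyb, hab.symm⟩⟩
    · obtain ⟨y, hyR, hyx, hy⟩ := hpart x hxR hxv
      by_cases hyv : y = v
      · refine ⟨a, .inl rfl, fun h => haR (h ▸ hxR), ?_⟩
        subst hyv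
        rcases hy with h | ⟨m, h₁, h₂⟩
        · exact absurd ((hvx x).1 h ▸ hxR) haR
        · exact .inl ((hvx m).1 h₁ ▸ h₂)
      · exact ⟨y, .inr ⟨hyR, hyv⟩, hyx, hy⟩

theorem exists_isSemitotalDominatingSet_ncard_le_of_neighborSet_eq_singleton {v a b : V}
    [Finite V] (hv : G.neighborSet v = {a}) (hab : G.Adj a b) (hbv : b ≠ v) {R : Set V}
    (hR : IsDominatingSet G R)
    (hpart : ∀ x ∈ R, x ≠ v → ∃ y ∈ R, y ≠ x ∧ WithinTwo G y x) :
    ∃ S, IsSemitotalDominatingSet G S ∧ S.ncard ≤ R.ncard := by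
  by_cases hvR : v ∈ R ∧ ∀ y ∈ R, y ≠ v → ¬ WithinTwo G y v
  · obtain ⟨hvR, hvp⟩ := hvR
    have hva : G.Adj v a := (Set.ext_iff.1 hv a).2 rfl
    have haR : a ∉ R := fun haR => hvp a haR hva.ne' (.inl hva.symm)
    refine ⟨_, isSemitotalDominatingSet_insert_sdiff_of_neighborSet_eq_singleton hv hab hbv hR
      haR hpart, ?_⟩
    calc (insert a (R \ {v})).ncard ≤ (R \ {v}).ncard + 1 := Set.ncard_insert_le _ _
      _ = R.ncard := Set.ncard_sdiff_singleton_add_one hvR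
  · refine ⟨R, ⟨hR, fun x hxR => ?_⟩, le_rfl⟩
    by_cases hxv : x = v
    · subst hxv
      simpa [hxR] using hvR
    · exact hpart x hxR hxv

theorem exists_isSemitotalDominatingSet_ncard_le_add_one {v b : V} (hvb : G.Adj v b) {R : Set V}
    (hdom : ∀ x ∉ R, x ≠ v → ∃ y ∈ R, G.Adj y x)
    (hpart : ∀ x ∈ R, (∃ y ∈ R, y ≠ x ∧ WithinTwo G y x) ∨ x = v ∨ G.Adj v x)
    (hv : v ∉ R → ∃ x ∈ R, G.Adj x v) :
    ∃ S, IsSemitotalDominatingSet G S ∧ S.ncard ≤ R.ncard + 1 := by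
  by_cases hvR : v ∈ R
  · refine ⟨insert b R, ⟨fun y hy => ?_, ?_⟩, Set.ncard_insert_le _ _⟩
    · obtain ⟨z, hz, hzy⟩ := hdom y (fun h => hy (.inr h)) fun h => hy (.inr (h ▸ hvR))
      exact ⟨z, .inr hz, hzy⟩
    rintro y (rfl | hy)
    · exact ⟨v, .inr hvR, hvb.ne, .inl hvb⟩
    rcases hpart y hy with ⟨z, hz, hzy, h⟩ | rfl | h
    · exact ⟨z, .inr hz, hzy, h⟩
    · exact ⟨b, .inl rfl, hvb.ne', .inl hvb.symm⟩
    · exact ⟨v, .inr hvR, h.ne, .inl h⟩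
  · refine ⟨insert v R, ⟨fun y hy => ?_, ?_⟩, Set.ncard_insert_le _ _⟩
    · obtain ⟨z, hz, hzy⟩ := hdom y (fun h => hy (.inr h)) fun h => hy (.inl h)
      exact ⟨z, .inr hz, hzy⟩
    rintro y (rfl | hy)
    · obtain ⟨x, hx, hxy⟩ := hv hvR
      exact ⟨x, .inr hx, hxy.ne, .inl hxy⟩
    rcases hpart y hy with ⟨z, hz, hzy, h⟩ | rfl | h
    · exact ⟨z, .inr hz, hzy, h⟩
    · exact absurd hy hvR
    · exact ⟨v, .inl rfl, h.ne, .inl h⟩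

end Domination

theorem Set.ncard_eq_ncard_preimage_inl_add_ncard_preimage_inr {α β : Type*} [Finite α] [Finite β]
    (S : Set (α ⊕ β)) : S.ncard = (Sum.inl ⁻¹' S).ncard + (Sum.inr ⁻¹' S).ncard := by
  conv_lhs => rw [← Set.image_preimage_inl_union_image_preimage_inr S]
  rw [Set.ncard_union_eq Set.disjoint_image_inl_image_inr,
    Set.ncard_image_of_injective _ Sum.inl_injective,
    Set.ncard_image_of_injective _ Sum.inr_injective]

section Attach

variable {V W : Type} {G : SimpleGraph V} {H : SimpleGraph W} {v : V} {w : W}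

@[simp] theorem attach_adj_inl_inl {x y : V} :
    (attach G H v w).Adj (.inl x) (.inl y) ↔ G.Adj x y := Iff.rfl

@[simp] theorem attach_adj_inl_inr {x : V} {y : W} :
    (attach G H v w).Adj (.inl x) (.inr y) ↔ x = v ∧ y = w := Iff.rfl

@[simp] theorem attach_adj_inr_inl {y : W} {x : V} :
    (attach G H v w).Adj (.inr y) (.inl x) ↔ x = v ∧ y = w := Iff.rfl

@[simp] theorem attach_adj_inr_inr {x y : W} :
    (attach G H v w).Adj (.inr x) (.inr y) ↔ H.Adj x y := Iff.rfl

def attachInl : G →g attach G H v w := ⟨Sum.inl, id⟩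

def attachInr : H →g attach G H v w := ⟨Sum.inr, id⟩

def attachComm : attach H G w v ≃g attach G H v w where
  toEquiv := Equiv.sumComm W V
  map_rel_iff' := by rintro (x | x) (y | y) <;> simp [and_comm]

theorem IsDominatingSet.attach_inl {S : Set (V ⊕ W)} (hS : IsDominatingSet (attach G H v w) S)
    {x : V} (hx : .inl x ∉ S) : (∃ y, .inl y ∈ S ∧ G.Adj y x) ∨ (x = v ∧ .inr w ∈ S) := by
  obtain ⟨y | y, hy, hyx⟩ := hS _ hx
  · exact .inl ⟨y, hy, hyx⟩
  · obtain ⟨rfl, rfl⟩ := hyx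
    exact .inr ⟨rfl, hy⟩

theorem IsDominatingSet.attach_inr {S : Set (V ⊕ W)} (hS : IsDominatingSet (attach G H v w) S)
    {y : W} (hy : .inr y ∉ S) : (∃ z, .inr z ∈ S ∧ H.Adj z y) ∨ (y = w ∧ .inl v ∈ S) :=
  (hS.preimage_iso attachComm).attach_inl hy

theorem IsSemitotalDominatingSet.partner_attach_inl {S : Set (V ⊕ W)}
    (hS : IsSemitotalDominatingSet (attach G H v w) S) {x : V} (hx : .inl x ∈ S) :
    (∃ y, .inl y ∈ S ∧ y ≠ x ∧ WithinTwo G y x) ∨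
      (x = v ∧ ∃ z, .inr z ∈ S ∧ (z = w ∨ H.Adj z w)) ∨ (G.Adj v x ∧ .inr w ∈ S) := by
  obtain ⟨y | z, hy, hne, h⟩ := hS.2 _ hx
  · have hyx : y ≠ x := fun h => hne (congrArg _ h)
    rcases h with h | ⟨m | m, h₁, h₂⟩
    · exact .inl ⟨y, hy, hyx, .inl h⟩
    · exact .inl ⟨y, hy, hyx, .inr ⟨m, h₁, h₂⟩⟩
    · exact absurd (h₁.1.trans h₂.1.symm) hyx
  · rcases h with h | ⟨m | m, h₁, h₂⟩
    · exact .inr (.inl ⟨h.1, z, hy, .inl h.2⟩)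
    · obtain ⟨rfl, rfl⟩ := h₁
      exact .inr (.inr ⟨h₂, hy⟩)
    · obtain ⟨rfl, rfl⟩ := h₂
      exact .inr (.inl ⟨rfl, z, hy, .inr h₁⟩)

theorem IsSemitotalDominatingSet.partner_attach_inr {S : Set (V ⊕ W)}
    (hS : IsSemitotalDominatingSet (attach G H v w) S) {y : W} (hy : .inr y ∈ S) :
    (∃ z, .inr z ∈ S ∧ z ≠ y ∧ WithinTwo H z y) ∨
      (y = w ∧ ∃ x, .inl x ∈ S ∧ (x = v ∨ G.Adj x v)) ∨ (H.Adj w y ∧ .inl v ∈ S) :=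
  (hS.preimage_iso attachComm).partner_attach_inl hy

theorem isSemitotalDominatingSet_attach {S : Set (V ⊕ W)}
    (hl : IsSemitotalDominatingSet G (Sum.inl ⁻¹' S))
    (hr : IsSemitotalDominatingSet H (Sum.inr ⁻¹' S)) :
    IsSemitotalDominatingSet (attach G H v w) S := by
  constructor
  · rintro (x | y) h
    · obtain ⟨u, hu, hux⟩ := hl.1 x h
      exact ⟨.inl u, hu, hux⟩
    · obtain ⟨u, hu, huy⟩ := hr.1 y h
      exact ⟨.inr u, hu, huy⟩
  · rintro (x | y) h
    · obtain ⟨u, hu, hne, hux⟩ := hl.2 x h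
      exact ⟨.inl u, hu, by simpa using hne, hux.map attachInl⟩
    · obtain ⟨u, hu, hne, huy⟩ := hr.2 y h
      exact ⟨.inr u, hu, by simpa using hne, huy.map attachInr⟩

theorem isSemitotalDominatingSet_attach_pendant {S : Set (V ⊕ Fin 1)}
    (hl : IsSemitotalDominatingSet G (Sum.inl ⁻¹' S)) (hv : .inl v ∈ S) :
    IsSemitotalDominatingSet (attach G (⊥ : SimpleGraph (Fin 1)) v 0) S := by
  constructor
  · rintro (x | y) h
    · obtain ⟨u, hu, hux⟩ := hl.1 x h
      exact ⟨.inl u, hu, hux⟩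
    · exact ⟨.inl v, hv, rfl, Subsingleton.elim _ _⟩
  · rintro (x | y) h
    · obtain ⟨u, hu, hne, hux⟩ := hl.2 x h
      exact ⟨.inl u, hu, by simpa using hne, hux.map attachInl⟩
    · exact ⟨.inl v, hv, Sum.inl_ne_inr, .inl ⟨rfl, Subsingleton.elim _ _⟩⟩

theorem ncard_neighborSet_attach_inl [Finite V] [DecidableEq V] (x : V) :
    ((attach G H v w).neighborSet (.inl x)).ncard =
      (G.neighborSet x).ncard + if x = v then 1 else 0 := by
  by_cases hxv : x = v
  · subst hxv
    have : (attach G H x w).neighborSet (.inl x) = insert (.inr w) (.inl '' G.neighborSet x) := by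
      ext (y | y) <;> simp [eq_comm]
    rw [this, Set.ncard_insert_of_notMem (by simp),
      Set.ncard_image_of_injective _ Sum.inl_injective, if_pos rfl]
  · have : (attach G H v w).neighborSet (.inl x) = .inl '' G.neighborSet x := by
      ext (y | y) <;> simp [hxv]
    rw [this, Set.ncard_image_of_injective _ Sum.inl_injective, if_neg hxv, add_zero]

theorem ncard_neighborSet_attach_inr [Finite W] [DecidableEq W] (y : W) :
    ((attach G H v w).neighborSet (.inr y)).ncard =
      (H.neighborSet y).ncard + if y = w then 1 else 0 :=
  (ncard_neighborSet_iso attachComm (.inl y)).trans (ncard_neighborSet_attach_inl y)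

theorem preimage_inl_setOf_isLeaf_attach [Finite V] (hv : (G.neighborSet v).ncard ≠ 0) :
    Sum.inl ⁻¹' {z | IsLeaf (attach G H v w) z} = {x | IsLeaf G x} \ {v} := by
  classical
  ext x
  simp only [Set.mem_preimage, Set.mem_ofPred_eq, Set.mem_sdiff, Set.mem_singleton_iff, IsLeaf,
    ncard_neighborSet_attach_inl]
  split_ifs with hxv
  · subst hxv
    simp only [not_true_eq_false, and_false, iff_false]
    omega
  · simp [hxv]

theorem ncard_setOf_isLeaf_attach_pendant [Finite V] (hv : 2 ≤ (G.neighborSet v).ncard) :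
    {z | IsLeaf (attach G (⊥ : SimpleGraph (Fin 1)) v 0) z}.ncard = {x | IsLeaf G x}.ncard + 1 := by
  classical
  have hu : IsLeaf (attach G (⊥ : SimpleGraph (Fin 1)) v 0) (.inr 0) := by
    rw [IsLeaf, ncard_neighborSet_attach_inr]
    simp
  rw [Set.ncard_eq_ncard_preimage_inl_add_ncard_preimage_inr,
    preimage_inl_setOf_isLeaf_attach (by omega),
    Set.sdiff_singleton_eq_self (by simp only [Set.mem_ofPred_eq, IsLeaf]; omega),
    Set.eq_univ_of_forall (s := Sum.inr ⁻¹' _) fun y => Subsingleton.elim (0 : Fin 1) y ▸ hu,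
    Set.ncard_univ, Nat.card_unique]

theorem exists_isSemitotalDominatingSet_ncard_le_of_attach_pendant [Finite V] {b : V}
    (hvb : G.Adj v b) {S : Set (V ⊕ Fin 1)}
    (hS : IsSemitotalDominatingSet (attach G (⊥ : SimpleGraph (Fin 1)) v 0) S) :
    ∃ R, IsSemitotalDominatingSet G R ∧ R.ncard ≤ S.ncard := by
  rw [Set.ncard_eq_ncard_preimage_inl_add_ncard_preimage_inr S]
  by_cases hu : Sum.inr 0 ∈ S
  · have hQ : (Sum.inr ⁻¹' S : Set (Fin 1)).ncard = 1 :=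
      Set.ncard_eq_one.2
        ⟨0, Set.eq_singleton_iff_unique_mem.2 ⟨hu, fun i _ => Subsingleton.elim i 0⟩⟩
    rw [hQ]
    refine exists_isSemitotalDominatingSet_ncard_le_add_one hvb
      (fun x hx hxv => (hS.1.attach_inl hx).resolve_right fun h => hxv h.1)
      (fun x hx => ?_) (fun hvR => ?_)
    · rcases hS.partner_attach_inl hx with h | ⟨h, -⟩ | ⟨h, -⟩
      exacts [.inl h, .inr (.inl h), .inr (.inr h)]
    · rcases hS.partner_attach_inr hu with ⟨z, -, hz, -⟩ | ⟨-, x, hx, rfl | h⟩ | ⟨h, -⟩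
      · exact absurd (Subsingleton.elim z 0) hz
      · exact absurd hx hvR
      · exact ⟨x, hx, h⟩
      · exact absurd h (by simp)
  · refine ⟨_, ⟨fun x hx => ?_, fun x hx => ?_⟩, Nat.le_add_right _ _⟩
    · exact (hS.1.attach_inl hx).resolve_right fun h => hu h.2
    · rcases hS.partner_attach_inl hx with h | ⟨-, z, hz, -⟩ | ⟨-, h⟩
      · exact h
      · exact absurd (Subsingleton.elim z 0 ▸ hz) hu
      · exact absurd h hu

end Attach

section PathGraph

theorem ncard_neighborSet_pathGraph_five (i : Fin 5) :
    ((pathGraph 5).neighborSet i).ncard = if i = 0 ∨ i = 4 then 1 else 2 := by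
  have : (pathGraph 5).neighborSet i = {j | i.val + 1 = j.val ∨ j.val + 1 = i.val} := by
    ext j
    simp [pathGraph_adj]
  rw [this, Set.ncard_eq_toFinset_card']
  clear this
  revert i
  decide

theorem isSemitotalDominatingSet_pathLabel :
    IsSemitotalDominatingSet (pathGraph 5) {i | pathLabel i = Label.A} := by
  simp only [IsSemitotalDominatingSet, IsDominatingSet, WithinTwo, pathGraph_adj,
    Set.mem_ofPred_eq]
  decide

set_option synthInstance.maxSize 1000 in
theorem two_le_card_of_dominates_pathGraph_five (Q : Finset (Fin 5))
    (hdom : ∀ y, y ≠ 0 → y ∉ Q → ∃ z ∈ Q, (pathGraph 5).Adj z y)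
    (hpart : ∀ y ∈ Q, y ≠ 0 → ¬ (pathGraph 5).Adj 0 y →
      ∃ z ∈ Q, z ≠ y ∧ WithinTwo (pathGraph 5) z y) :
    2 ≤ Q.card ∧ (0 ∈ Q → 3 ≤ Q.card) := by
  revert Q
  simp only [WithinTwo, pathGraph_adj]
  decide

variable {V : Type} {G : SimpleGraph V} {v : V} {S : Set (V ⊕ Fin 5)}

theorem IsSemitotalDominatingSet.ncard_preimage_inr_attach_pathGraph
    (hS : IsSemitotalDominatingSet (attach G (pathGraph 5) v 0) S) :
    2 ≤ (Sum.inr ⁻¹' S).ncard ∧ (Sum.inr 0 ∈ S → 3 ≤ (Sum.inr ⁻¹' S).ncard) := by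
  obtain ⟨Q, hQ⟩ := (Sum.inr ⁻¹' S).toFinite.exists_finset_coe
  have hmem : ∀ i, i ∈ Q ↔ Sum.inr i ∈ S := fun i => by rw [← Finset.mem_coe, hQ]; rfl
  simp only [← hmem, ← hQ, Set.ncard_coe_finset]
  refine two_le_card_of_dominates_pathGraph_five Q (fun y hy0 hy => ?_) (fun y hy hy0 hadj => ?_)
  · rcases hS.1.attach_inr ((hmem y).not.1 hy) with ⟨z, hz, hzy⟩ | ⟨rfl, -⟩
    exacts [⟨z, (hmem z).2 hz, hzy⟩, absurd rfl hy0]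
  · rcases hS.partner_attach_inr ((hmem y).1 hy) with ⟨z, hz, hzy, h⟩ | ⟨rfl, -⟩ | ⟨h, -⟩
    exacts [⟨z, (hmem z).2 hz, hzy, h⟩, absurd rfl hy0, absurd h hadj]

theorem ncard_setOf_isLeaf_attach_pathGraph [Finite V] (hv : (G.neighborSet v).ncard = 1) :
    {z | IsLeaf (attach G (pathGraph 5) v 0) z}.ncard = {x | IsLeaf G x}.ncard := by
  classical
  rw [Set.ncard_eq_ncard_preimage_inl_add_ncard_preimage_inr,
    preimage_inl_setOf_isLeaf_attach (by omega)]
  have : {i : Fin 5 | IsLeaf (attach G (pathGraph 5) v 0) (.inr i)}.ncard = 1 := by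
    simp only [IsLeaf, ncard_neighborSet_attach_inr, ncard_neighborSet_pathGraph_five]
    rw [Set.ncard_eq_toFinset_card']
    decide
  exact (congrArg _ this).trans (Set.ncard_sdiff_singleton_add_one hv)

/-- The new path `u₁ … u₅` is `inr 0, …, inr 4`. It contains at least two vertices of `S`, and
three when `u₁ ∈ S`; the third one pays for adding `v` to the trace of `S` on `G`. -/
theorem exists_isSemitotalDominatingSet_ncard_add_two_le_of_attach_pathGraph [Finite V]
    {a b : V} (hv : G.neighborSet v = {a}) (hab : G.Adj a b) (hbv : b ≠ v)
    (hS : IsSemitotalDominatingSet (attach G (pathGraph 5) v 0) S) :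
    ∃ R, IsSemitotalDominatingSet G R ∧ R.ncard + 2 ≤ S.ncard := by
  set R : Set V := Sum.inl ⁻¹' S
  have hva : ∀ x, G.Adj v x ↔ x = a := fun x => Set.ext_iff.1 hv x
  have hdom : ∀ x ∉ R, x ≠ v → ∃ y ∈ R, G.Adj y x := fun x hx hxv =>
    (hS.1.attach_inl hx).resolve_right fun h => hxv h.1
  have hpart : ∀ x ∈ R, x ≠ v →
      (∃ y ∈ R, y ≠ x ∧ WithinTwo G y x) ∨ (x = a ∧ Sum.inr 0 ∈ S) := by
    intro x hx hxv
    rcases hS.partner_attach_inl hx with h | ⟨h, -⟩ | ⟨h, h0⟩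
    exacts [.inl h, absurd h hxv, .inr ⟨(hva x).1 h, h0⟩]
  obtain ⟨hQ2, hQ3⟩ := hS.ncard_preimage_inr_attach_pathGraph
  rw [Set.ncard_eq_ncard_preimage_inl_add_ncard_preimage_inr S]
  by_cases h0 : Sum.inr 0 ∈ S
  · have hdom' : IsDominatingSet G (insert v R) := fun x hx => by
      obtain ⟨y, hy, hyx⟩ := hdom x (fun h => hx (.inr h)) fun h => hx (.inl h)
      exact ⟨y, .inr hy, hyx⟩
    have hpart' : ∀ x ∈ insert v R, x ≠ v → ∃ y ∈ insert v R, y ≠ x ∧ WithinTwo G y x := by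
      intro x hx hxv
      rcases hpart x (hx.resolve_left hxv) hxv with ⟨y, hy, hyx, h⟩ | ⟨rfl, -⟩
      · exact ⟨y, .inr hy, hyx, h⟩
      · exact ⟨v, .inl rfl, hxv.symm, .inl ((hva _).2 rfl)⟩
    obtain ⟨R', hR', hcard⟩ :=
      exists_isSemitotalDominatingSet_ncard_le_of_neighborSet_eq_singleton hv hab hbv hdom' hpart'
    exact ⟨R', hR', by linarith [hQ3 h0, Set.ncard_insert_le v R]⟩
  · obtain ⟨R', hR', hcard⟩ :=
      exists_isSemitotalDominatingSet_ncard_le_of_neighborSet_eq_singleton hv hab hbv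
        (R := R) (fun x hx => (hS.1.attach_inl hx).resolve_right fun h => h0 h.2)
        (fun x hx hxv => (hpart x hx hxv).resolve_right fun h => h0 h.2)
    exact ⟨R', hR', by linarith⟩

end PathGraph

namespace TFamily

variable {V W : Type} {G : SimpleGraph V} {H : SimpleGraph W} {f : V → Label}

theorem finite (h : TFamily G f) : Finite V := by
  induction h with
  | base => infer_instance
  | op1 _ _ _ ih => have := ih; infer_instance
  | op2 _ _ _ _ ih => have := ih; infer_instance
  | iso e _ ih => have := ih; exact .of_equiv _ e.toEquiv

structure Invariant (G : SimpleGraph V) (f : V → Label) : Prop where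
  isSemitotalDominatingSet : IsSemitotalDominatingSet G {x | f x = Label.A}
  two_le_ncard_neighborSet : ∀ x, f x = Label.A → 2 ≤ (G.neighborSet x).ncard
  card_eq : 5 * {x | f x = Label.A}.ncard + 2 * {x | IsLeaf G x}.ncard = 2 * Nat.card V + 4
  ncard_le : ∀ S, IsSemitotalDominatingSet G S → {x | f x = Label.A}.ncard ≤ S.ncard

theorem invariant_base : Invariant (pathGraph 5) pathLabel where
  isSemitotalDominatingSet := isSemitotalDominatingSet_pathLabel
  two_le_ncard_neighborSet i hi := by
    rw [ncard_neighborSet_pathGraph_five]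
    revert i
    decide
  card_eq := by
    simp only [IsLeaf, ncard_neighborSet_pathGraph_five, Set.ncard_eq_toFinset_card',
      Nat.card_eq_fintype_card, Fintype.card_fin]
    decide
  ncard_le S hS := by
    rw [Set.ncard_eq_toFinset_card']
    exact le_trans (by decide) hS.two_le_ncard

namespace Invariant

variable {v : V}

theorem attach_pendant [Finite V] (hG : Invariant G f) (hv : f v = Label.A) :
    Invariant (attach G (⊥ : SimpleGraph (Fin 1)) v 0) (Sum.elim f fun _ => Label.C) := by
  classical
  have hdeg := hG.two_le_ncard_neighborSet v hv
  obtain ⟨b, hvb⟩ := Set.nonempty_of_ncard_ne_zero (s := G.neighborSet v) (by omega)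
  have hA : {z : V ⊕ Fin 1 | Sum.elim f (fun _ => Label.C) z = Label.A}.ncard =
      {x | f x = Label.A}.ncard := by
    rw [Set.ncard_eq_ncard_preimage_inl_add_ncard_preimage_inr]
    simp
  refine ⟨isSemitotalDominatingSet_attach_pendant hG.isSemitotalDominatingSet hv, ?_, ?_,
    fun S hS => ?_⟩
  · rintro (x | y) hx
    · rw [ncard_neighborSet_attach_inl]
      exact (hG.two_le_ncard_neighborSet x hx).trans (Nat.le_add_right _ _)
    · exact absurd hx (by simp)
  · rw [hA, ncard_setOf_isLeaf_attach_pendant hdeg, Nat.card_sum, Nat.card_unique (α := Fin 1)]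
    linarith [hG.card_eq]
  · obtain ⟨R, hR, hcard⟩ := exists_isSemitotalDominatingSet_ncard_le_of_attach_pendant hvb hS
    exact hA ▸ (hG.ncard_le R hR).trans hcard

theorem attach_pathGraph [Finite V] (hG : Invariant G f) (hv : f v = Label.C)
    (hdeg : (G.neighborSet v).ncard = 1) :
    Invariant (attach G (pathGraph 5) v 0) (Sum.elim f pathLabel) := by
  classical
  obtain ⟨a, haA, hav⟩ := hG.isSemitotalDominatingSet.1 v (by simp [hv])
  have hNv : G.neighborSet v = {a} := by
    obtain ⟨x, hx⟩ := Set.ncard_eq_one.1 hdeg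
    have hax : a ∈ G.neighborSet v := hav.symm
    rw [hx] at hax ⊢
    rw [Set.mem_singleton_iff.1 hax]
  obtain ⟨b, hab, hbv⟩ := Set.exists_ne_of_one_lt_ncard (hG.two_le_ncard_neighborSet a haA) v
  have hA : {z : V ⊕ Fin 5 | Sum.elim f pathLabel z = Label.A}.ncard =
      {x | f x = Label.A}.ncard + 2 := by
    rw [Set.ncard_eq_ncard_preimage_inl_add_ncard_preimage_inr]
    congr 1
    show {i | pathLabel i = Label.A}.ncard = 2
    rw [Set.ncard_eq_toFinset_card']
    decide
  refine ⟨isSemitotalDominatingSet_attach hG.isSemitotalDominatingSet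
    isSemitotalDominatingSet_pathLabel, ?_, ?_, fun S hS => ?_⟩
  · rintro (x | i) hx
    · rw [ncard_neighborSet_attach_inl]
      exact (hG.two_le_ncard_neighborSet x hx).trans (Nat.le_add_right _ _)
    · rw [ncard_neighborSet_attach_inr]
      exact (invariant_base.two_le_ncard_neighborSet i hx).trans (Nat.le_add_right _ _)
  · rw [hA, ncard_setOf_isLeaf_attach_pathGraph hdeg, Nat.card_sum,
      Nat.card_eq_fintype_card (α := Fin 5), Fintype.card_fin]
    linarith [hG.card_eq]
  · obtain ⟨R, hR, hcard⟩ :=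
      exists_isSemitotalDominatingSet_ncard_add_two_le_of_attach_pathGraph hNv hab hbv hS
    rw [hA]
    linarith [hG.ncard_le R hR]

theorem iso (e : G ≃g H) (hG : Invariant G f) : Invariant H (fun w => f (e.symm w)) := by
  have hA : {w | f (e.symm w) = Label.A} = e.symm ⁻¹' {x | f x = Label.A} := rfl
  have hL : {w | IsLeaf H w} = e.symm ⁻¹' {x | IsLeaf G x} := by
    ext w
    simp only [Set.mem_preimage, Set.mem_ofPred_eq, IsLeaf, ncard_neighborSet_iso e.symm]
  refine ⟨hA ▸ hG.isSemitotalDominatingSet.preimage_iso e.symm, fun w hw => ?_, ?_, fun S hS => ?_⟩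
  · rw [← ncard_neighborSet_iso e.symm w]
    exact hG.two_le_ncard_neighborSet _ hw
  · rw [hA, hL, ncard_preimage_iso, ncard_preimage_iso, ← Nat.card_congr e.toEquiv]
    exact hG.card_eq
  · rw [hA, ncard_preimage_iso, ← ncard_preimage_iso e S]
    exact hG.ncard_le _ (hS.preimage_iso e)

end Invariant

theorem invariant (h : TFamily G f) : Invariant G f := by
  induction h with
  | base => exact invariant_base
  | op1 _ hv h ih => have := h.finite; exact ih.attach_pendant hv
  | op2 _ hv hdeg h ih => have := h.finite; exact ih.attach_pathGraph hv hdeg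
  | iso e _ ih => exact ih.iso e

end TFamily

theorem tFamily_semitotalDominationNumber_formula_general {V : Type} [Fintype V]
    (T : SimpleGraph V) (f : V → Label) (h : TFamily T f) :
    (semitotalDominationNumber T : ℝ) =
        2 * ((Fintype.card V : ℝ) - ({v : V | IsLeaf T v}.ncard : ℝ) + 2) / 5 ∧
      IsSemitotalDominatingSet T {v : V | f v = Label.A} ∧
      {v : V | f v = Label.A}.ncard = semitotalDominationNumber T := by
  obtain ⟨hA, -, hcard, hmin⟩ := h.invariant
  have hγ := semitotalDominationNumber_eq_ncard hA hmin
  refine ⟨?_, hA, hγ.symm⟩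
  rw [Nat.card_eq_fintype_card] at hcard
  rw [hγ, eq_div_iff (by norm_num)]
  have hcardℝ := congrArg (Nat.cast : ℕ → ℝ) hcard
  push_cast at hcardℝ
  linarith

/-- If `(T, S) ∈ 𝒯`, then `γ_t2(T) = 2(n(T) − l(T) + 2)/5` and `S_A`
is a minimum semitotal dominating set of `T`. -/
theorem tFamily_semitotalDominationNumber_formula {V : Type} [Fintype V]
    (T : SimpleGraph V) (f : V → Label) (hT : T.IsTree) (h : TFamily T f) :
    (semitotalDominationNumber T : ℝ) =
        2 * ((Fintype.card V : ℝ) - ({v : V | IsLeaf T v}.ncard : ℝ) + 2) / 5 ∧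
      IsSemitotalDominatingSet T {v : V | f v = Label.A} ∧
      {v : V | f v = Label.A}.ncard = semitotalDominationNumber T :=
  tFamily_semitotalDominationNumber_formula_general T f h
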